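/- arXiv:2403.06177 — 3 statements merged into one kernel-verified Lean document; each statement's English description precedes it below -/
import Mathlib

section
/- Let μ be a finitely additive probability measure on an algebra Σ of subsets of X. Then μ satisfies the Anger–Lembcke cover inequality: for all non-negative integers m, n, k and every (n,k)-cover U_1,…,U_m of (U, X) with U ∈ Σ, k + n·μ(U) ≤ Σ_{i=1}^m μ(U_i). -/
/-!
Sort the points of `X` by their signature, the set of indices `i` with `x ∈ Aᵢ`. The fibres of
the signature are the atoms of the algebra generated by the `Aᵢ`; they are disjoint members of
`Σ`, so by finite additivity `∑ᵢ cᵢ μ(Aᵢ) = ∑ₛ (∑_{i ∈ s} cᵢ) μ(atom s)`, where the inner sum is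
the weight carried by every point of the atom. Hence a pointwise inequality between weighted
membership counts integrates to the same inequality between weighted sums of measures, and the
cover hypothesis is such a pointwise inequality: `k + n·1_U ≤ ∑ᵢ 1_{Uᵢ}`.
-/

open scoped Classical

/-- A finite sequence `Us` covers `W` at least `n` times. -/
def Covers {X : Type*} {m : ℕ} (Us : Fin m → Set X) (W : Set X) (n : ℕ) : Prop :=
  ∀ x ∈ W, n ≤ (Finset.univ.filter fun i => x ∈ Us i).card

/-- `Us` is an `(n,k)`-cover of `(W, X)`. -/
def IsNKCover {X : Type*} {m : ℕ} (Us : Fin m → Set X) (W : Set X) (n k : ℕ) : Prop :=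
  Covers Us Set.univ k ∧ Covers Us W (n + k)

/-- The Anger–Lembcke cover inequality for `g` on the algebra `S`. -/
def CoverIneq {X : Type*} (S : Set (Set X)) (g : Set X → ℝ) : Prop :=
  ∀ (m n k : ℕ) (Us : Fin m → Set X) (W : Set X), W ∈ S → (∀ i, Us i ∈ S) →
    IsNKCover Us W n k → (k : ℝ) + (n : ℝ) * g W ≤ ∑ i, g (Us i)

open MeasureTheory Finset

section

variable {α ι κ : Type*} [Fintype ι] [Fintype κ] {C : Set (Set α)}

noncomputable def signature (A : ι → Set α) (x : α) : Finset ι := {i | x ∈ A i}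

theorem mem_signature {A : ι → Set α} {x : α} {i : ι} : i ∈ signature A x ↔ x ∈ A i := by
  simp [signature]

theorem signature_preimage_mem (hC : IsSetAlgebra C) {A : ι → Set α} (hA : ∀ i, A i ∈ C)
    (s : Finset ι) : signature A ⁻¹' {s} ∈ C := by
  have hatom : signature A ⁻¹' {s} = ⋂ i ∈ univ, if i ∈ s then A i else (A i)ᶜ := by
    ext x
    simp only [Set.mem_preimage, Set.mem_singleton_iff, Finset.ext_iff, mem_signature,
      Set.mem_iInter, mem_univ, true_implies]
    refine forall_congr' fun i => ?_
    split_ifs with hi <;> simp [hi]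
  rw [hatom]
  refine hC.biInter_mem _ fun i _ => ?_
  split_ifs
  exacts [hA i, hC.compl_mem (hA i)]

theorem addContent_eq_sum_signature_preimage (hC : IsSetAlgebra C) (m : AddContent ℝ C)
    {A : ι → Set α} (hA : ∀ i, A i ∈ C) (i : ι) :
    m (A i) = ∑ s with i ∈ s, m (signature A ⁻¹' {s}) := by
  have hunion : A i = ⋃ s ∈ ({s | i ∈ s} : Finset (Finset ι)), signature A ⁻¹' {s} := by
    ext x
    simp [mem_signature]
  rw [hunion, addContent_biUnion_eq hC.isSetRing (fun s _ => signature_preimage_mem hC hA s)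
    (Set.pairwiseDisjoint_fiber _ _)]

theorem sum_mul_addContent_nonneg (hC : IsSetAlgebra C) (m : AddContent ℝ C)
    (hm : ∀ s ∈ C, 0 ≤ m s) {A : ι → Set α} (hA : ∀ i, A i ∈ C) (c : ι → ℝ)
    (hc : ∀ x, 0 ≤ ∑ i with x ∈ A i, c i) :
    0 ≤ ∑ i, c i * m (A i) := by
  have hregroup : ∑ i, c i * m (A i) =
      ∑ s : Finset ι, (∑ i ∈ s, c i) * m (signature A ⁻¹' {s}) := by
    simp_rw [addContent_eq_sum_signature_preimage hC m hA, mul_sum, sum_mul, sum_filter]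
    rw [sum_comm]
    simp_rw [sum_ite_mem, univ_inter]
  rw [hregroup]
  refine sum_nonneg fun s _ => ?_
  rcases (signature A ⁻¹' {s}).eq_empty_or_nonempty with hempty | ⟨x, hx⟩
  · simp [hempty]
  · refine mul_nonneg ?_ (hm _ (signature_preimage_mem hC hA s))
    rw [← Set.mem_singleton_iff.mp hx]
    exact hc x

theorem sum_mul_addContent_le_sum_mul_addContent (hC : IsSetAlgebra C) (m : AddContent ℝ C)
    (hm : ∀ s ∈ C, 0 ≤ m s) {A : ι → Set α} {B : κ → Set α} (hA : ∀ i, A i ∈ C)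
    (hB : ∀ j, B j ∈ C) (a : ι → ℝ) (b : κ → ℝ)
    (hab : ∀ x, ∑ i with x ∈ A i, a i ≤ ∑ j with x ∈ B j, b j) :
    ∑ i, a i * m (A i) ≤ ∑ j, b j * m (B j) := by
  have hnonneg := sum_mul_addContent_nonneg hC m hm (A := Sum.elim A B)
    (Sum.forall.mpr ⟨hA, hB⟩) (Sum.elim (-a) b) fun x => by
      rw [sum_filter, Fintype.sum_sum_type, ← sum_filter, ← sum_filter]
      simp only [Sum.elim_inl, Sum.elim_inr, Pi.neg_apply, sum_neg_distrib, neg_add_eq_sub,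
        sub_nonneg]
      exact hab x
  simpa [Fintype.sum_sum_type, neg_mul, sum_neg_distrib, neg_add_eq_sub] using hnonneg

end

theorem IsNKCover.add_ite_le_card_filter_mem {X : Type*} {m n k : ℕ} {Us : Fin m → Set X}
    {W : Set X} (h : IsNKCover Us W n k) (x : X) :
    k + (if x ∈ W then n else 0) ≤ #{j | x ∈ Us j} := by
  split_ifs with hx
  · simpa [add_comm] using h.2 x hx
  · exact h.1 x trivial

/-- every finitely additive probability measure satisfies the
Anger–Lembcke cover inequality. -/
theorem prob_measure_cover_ineq {X : Type*} (S : Set (Set X))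
    (hSuniv : Set.univ ∈ S) (hScompl : ∀ A ∈ S, Aᶜ ∈ S)
    (hSunion : ∀ A ∈ S, ∀ B ∈ S, A ∪ B ∈ S)
    (μ : Set X → ℝ)
    (hrange : ∀ A ∈ S, 0 ≤ μ A ∧ μ A ≤ 1)
    (h0 : μ ∅ = 0) (h1 : μ Set.univ = 1)
    (hadd : ∀ A ∈ S, ∀ B ∈ S, Disjoint A B → μ (A ∪ B) = μ A + μ B) :
    CoverIneq S μ := by
  intro m n k Us W hW hUs hcover
  have hS : IsSetAlgebra S :=
    { empty_mem := by simpa using hScompl _ hSuniv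
      compl_mem := fun _ hA => hScompl _ hA
      union_mem := fun _ _ hA hB => hSunion _ hA _ hB }
  let ν : AddContent ℝ S := hS.isSetRing.addContent_of_union μ h0 (hadd _ · _ ·)
  have hsum := sum_mul_addContent_le_sum_mul_addContent hS ν (fun s hs => (hrange s hs).1)
    (A := ![Set.univ, W]) (Fin.forall_fin_two.mpr ⟨hSuniv, hW⟩) hUs ![(k : ℝ), n] 1 fun x => by
      simpa [sum_filter, Fin.sum_univ_two] using
        (Nat.cast_le (α := ℝ)).mpr (hcover.add_ite_le_card_filter_mem x)
  have hν (s : Set X) : ν s = μ s := rfl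
  simpa [Fin.sum_univ_two, hν, h1] using hsum
end

section
/- If g: Σ → [0,1] satisfies g(∅)=0, g(X)=1 and the Anger–Lembcke cover inequality, and g(U) = 1 − g(Uᶜ) for every U ∈ Σ, then g is a finitely additive probability measure on Σ. -/
open scoped Classical

section

variable {X : Type*}

theorem card_filter_mem_pair (A B : Set X) (x : X) :
    (Finset.univ.filter fun i => x ∈ ![A, B] i).card =
      (if x ∈ A then 1 else 0) + (if x ∈ B then 1 else 0) := by
  rw [Finset.card_filter, Fin.sum_univ_two]
  rfl

theorem covers_pair_one {A B W : Set X} (hW : W ⊆ A ∪ B) : Covers ![A, B] W 1 := by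
  intro x hx
  rw [card_filter_mem_pair]
  rcases hW hx with h | h <;> split_ifs <;> simp_all

theorem covers_pair_two {A B W : Set X} (hW : W ⊆ A ∩ B) : Covers ![A, B] W 2 := by
  intro x hx
  rw [card_filter_mem_pair, if_pos (hW hx).1, if_pos (hW hx).2]

namespace CoverIneq

variable {S : Set (Set X)} {g : Set X → ℝ}

/-- The trivial `(0,0)`-cover of `A` by `A` alone. -/
theorem nonneg (hc : CoverIneq S g) {A : Set X} (hA : A ∈ S) : 0 ≤ g A := by
  have := hc 1 0 0 ![A] A hA (Fin.forall_fin_one.2 hA)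
    ⟨fun _ _ => Nat.zero_le _, fun _ _ => Nat.zero_le _⟩
  simpa using this

theorem le_add_of_subset_union (hc : CoverIneq S g) {A B W : Set X} (hA : A ∈ S) (hB : B ∈ S)
    (hW : W ∈ S) (hWAB : W ⊆ A ∪ B) : g W ≤ g A + g B := by
  have := hc 2 1 0 ![A, B] W hW (Fin.forall_fin_two.2 ⟨hA, hB⟩)
    ⟨fun _ _ => Nat.zero_le _, covers_pair_one hWAB⟩
  simpa [Fin.sum_univ_two] using this

theorem one_add_le_add_of_union_eq_univ (hc : CoverIneq S g) {A B W : Set X} (hA : A ∈ S)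
    (hB : B ∈ S) (hW : W ∈ S) (hAB : A ∪ B = Set.univ) (hWAB : W ⊆ A ∩ B) :
    1 + g W ≤ g A + g B := by
  have := hc 2 1 1 ![A, B] W hW (Fin.forall_fin_two.2 ⟨hA, hB⟩)
    ⟨covers_pair_one hAB.ge, covers_pair_two hWAB⟩
  simpa [Fin.sum_univ_two] using this

end CoverIneq

end

theorem selfdual_upper_prob_is_additive_general {X : Type*} (S : Set (Set X))
    (hScompl : ∀ A ∈ S, Aᶜ ∈ S)
    (hSunion : ∀ A ∈ S, ∀ B ∈ S, A ∪ B ∈ S)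
    (g : Set X → ℝ)
    (hc : CoverIneq S g)
    (hdual : ∀ U ∈ S, g U = 1 - g Uᶜ) :
    (∀ A ∈ S, 0 ≤ g A ∧ g A ≤ 1) ∧
      ∀ U ∈ S, ∀ V ∈ S, Disjoint U V → g (U ∪ V) = g U + g V := by
  refine ⟨fun A hA => ⟨hc.nonneg hA, ?_⟩, fun U hU V hV hUV => ?_⟩
  · linarith [hdual A hA, hc.nonneg (hScompl A hA)]
  have hUV_mem : U ∪ V ∈ S := hSunion U hU V hV
  have hsub : g (U ∪ V) ≤ g U + g V := hc.le_add_of_subset_union hU hV hUV_mem le_rfl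
  -- Superadditivity is subadditivity's dual: `Uᶜ, Vᶜ` is a `(1,1)`-cover of `(U ∪ V)ᶜ`.
  have hsup : 1 + g (U ∪ V)ᶜ ≤ g Uᶜ + g Vᶜ :=
    hc.one_add_le_add_of_union_eq_univ (hScompl U hU) (hScompl V hV) (hScompl _ hUV_mem)
      (by rw [← Set.compl_inter, hUV.inter_eq, Set.compl_empty]) (Set.compl_union U V).le
  linarith [hdual U hU, hdual V hV, hdual _ hUV_mem]

/-- an upper probability measure coinciding with its dual is a
finitely additive probability measure. -/
theorem selfdual_upper_prob_is_additive {X : Type*} (S : Set (Set X))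
    (hSuniv : Set.univ ∈ S) (hScompl : ∀ A ∈ S, Aᶜ ∈ S)
    (hSunion : ∀ A ∈ S, ∀ B ∈ S, A ∪ B ∈ S)
    (g : Set X → ℝ) (h0 : g ∅ = 0) (h1 : g Set.univ = 1)
    (hc : CoverIneq S g)
    (hdual : ∀ U ∈ S, g U = 1 - g Uᶜ) :
    (∀ A ∈ S, 0 ≤ g A ∧ g A ≤ 1) ∧
      ∀ U ∈ S, ∀ V ∈ S, Disjoint U V → g (U ∪ V) = g U + g V :=
  selfdual_upper_prob_is_additive_general S hScompl hSunion g hc hdual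
end

section
/- Every possibility measure on an algebra Σ is a plausibility measure: if Poss satisfies Poss(∅)=0, Poss(X)=1, and Poss(U∪V)=max(Poss(U),Poss(V)), then for all U_1,…,U_n ∈ Σ, Poss(U_1 ∩ … ∩ U_n) ≤ Σ_{∅≠I⊆{1,…,n}} (−1)^{|I|+1} Poss(⋃_{i∈I} U_i). -/
open scoped Classical

/-- The n-alternating plausibility inequality for `γ` on the algebra `S`. -/
def PlausIneq {X : Type*} (S : Set (Set X)) (γ : Set X → ℝ) : Prop :=
  ∀ n : ℕ, 0 < n → ∀ U : Fin n → Set X, (∀ i, U i ∈ S) →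
    γ (⋂ i, U i) ≤
      ∑ I ∈ Finset.univ.powerset.filter (fun I : Finset (Fin n) => I.Nonempty),
        (-1 : ℝ) ^ (I.card + 1) * γ (⋃ i ∈ I, U i)

/-- `γ` is a plausibility measure on the algebra `S`. -/
def IsPlaus {X : Type*} (S : Set (Set X)) (γ : Set X → ℝ) : Prop :=
  γ ∅ = 0 ∧ γ Set.univ = 1 ∧ PlausIneq S γ

/-!
The union of the `U i` over `I` has possibility `max_{i ∈ I} Poss (U i)`. If `m` minimises
`Poss (U i)`, adding `m` to a nonempty `I` does not change this maximum, so the subsets `J` and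
`insert m J` of the alternating sum cancel in pairs and only the term of `{m}` survives: the
right-hand side equals `Poss (U m)`, which dominates `Poss (⋂ i, U i)` by monotonicity.
-/

open Finset in
theorem sum_filter_nonempty_powerset_neg_one_pow_mul_eq {ι R : Type*} [DecidableEq ι]
    [CommRing R] {s : Finset ι} {m : ι} (hm : m ∈ s) (g : Finset ι → R)
    (hg : ∀ J ⊆ s.erase m, J.Nonempty → g (insert m J) = g J) :
    ∑ I ∈ s.powerset.filter (fun I => I.Nonempty), (-1) ^ (#I + 1) * g I = g {m} := by
  have hms : m ∉ s.erase m := notMem_erase m s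
  rw [sum_filter, ← insert_erase hm, sum_powerset_insert hms, ← sum_add_distrib]
  calc _ = ∑ J ∈ (s.erase m).powerset, if J = ∅ then g {m} else 0 := by
        refine sum_congr rfl fun J hJ => ?_
        rw [mem_powerset] at hJ
        rcases J.eq_empty_or_nonempty with rfl | hne
        · simp
        · rw [if_pos (insert_nonempty m J), if_pos hne, if_neg hne.ne_empty,
            card_insert_of_notMem (fun h => hms (hJ h)), hg J hJ hne]
          ring
    _ = g {m} := by simp

section Possibility

open MeasureTheory

variable {X : Type*} {S : Set (Set X)} {Poss : Set X → ℝ}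

theorem isSetAlgebra_of_univ_mem (hSuniv : Set.univ ∈ S) (hScompl : ∀ A ∈ S, Aᶜ ∈ S)
    (hSunion : ∀ A ∈ S, ∀ B ∈ S, A ∪ B ∈ S) : IsSetAlgebra S where
  empty_mem := Set.compl_univ ▸ hScompl _ hSuniv
  compl_mem A := hScompl A
  union_mem A B hA := hSunion A hA B

theorem possibility_mono (hmax : ∀ U ∈ S, ∀ V ∈ S, Poss (U ∪ V) = max (Poss U) (Poss V))
    {A B : Set X} (hA : A ∈ S) (hB : B ∈ S) (hAB : A ⊆ B) : Poss A ≤ Poss B := by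
  have h := hmax A hA B hB
  rw [Set.union_eq_self_of_subset_left hAB] at h
  exact h ▸ le_max_left _ _

theorem possibility_iInter_le_alternating_sum (hS : IsSetAlgebra S)
    (hmax : ∀ U ∈ S, ∀ V ∈ S, Poss (U ∪ V) = max (Poss U) (Poss V))
    {ι : Type*} [Fintype ι] (U : ι → Set X) (hU : ∀ i, U i ∈ S) {m : ι}
    (hm : ∀ i, Poss (U m) ≤ Poss (U i)) :
    Poss (⋂ i, U i) ≤
      ∑ I ∈ Finset.univ.powerset.filter (fun I : Finset ι => I.Nonempty),
        (-1 : ℝ) ^ (I.card + 1) * Poss (⋃ i ∈ I, U i) := by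
  have hUnion (J : Finset ι) : (⋃ i ∈ J, U i) ∈ S := hS.biUnion_mem J fun i _ => hU i
  have hInter : (⋂ i, U i) ∈ S := by simpa using hS.biInter_mem Finset.univ fun i _ => hU i
  have hAbsorb (J : Finset ι) (hJ : J.Nonempty) :
      Poss (⋃ i ∈ insert m J, U i) = Poss (⋃ i ∈ J, U i) := by
    obtain ⟨j, hj⟩ := hJ
    have hmJ : Poss (U m) ≤ Poss (⋃ i ∈ J, U i) :=
      (hm j).trans (possibility_mono hmax (hU j) (hUnion J) (Set.subset_biUnion_of_mem hj))
    rw [Finset.set_biUnion_insert, hmax _ (hU m) _ (hUnion J), max_eq_right hmJ]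
  rw [sum_filter_nonempty_powerset_neg_one_pow_mul_eq (Finset.mem_univ m) _
    fun J _ hJ => hAbsorb J hJ, Finset.set_biUnion_singleton]
  exact possibility_mono hmax hInter (hU m) (Set.iInter_subset U m)

end Possibility

theorem poss_is_plaus_general {X : Type*} (S : Set (Set X))
    (hSuniv : Set.univ ∈ S) (hScompl : ∀ A ∈ S, Aᶜ ∈ S)
    (hSunion : ∀ A ∈ S, ∀ B ∈ S, A ∪ B ∈ S)
    (Poss : Set X → ℝ)
    (hmax : ∀ U ∈ S, ∀ V ∈ S, Poss (U ∪ V) = max (Poss U) (Poss V)) :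
    PlausIneq S Poss := by
  intro n hn U hU
  obtain ⟨m, -, hm⟩ := Finset.exists_min_image Finset.univ (fun i => Poss (U i))
    (Finset.univ_nonempty_iff.mpr (Fin.pos_iff_nonempty.mp hn))
  exact possibility_iInter_le_alternating_sum
    (isSetAlgebra_of_univ_mem hSuniv hScompl hSunion) hmax U hU fun i => hm i (Finset.mem_univ i)

/-- every possibility measure is a plausibility measure. -/
theorem poss_is_plaus {X : Type*} (S : Set (Set X))
    (hSuniv : Set.univ ∈ S) (hScompl : ∀ A ∈ S, Aᶜ ∈ S)
    (hSunion : ∀ A ∈ S, ∀ B ∈ S, A ∪ B ∈ S)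
    (Poss : Set X → ℝ)
    (h0 : Poss ∅ = 0) (h1 : Poss Set.univ = 1)
    (hmax : ∀ U ∈ S, ∀ V ∈ S, Poss (U ∪ V) = max (Poss U) (Poss V)) :
    PlausIneq S Poss :=
  poss_is_plaus_general S hSuniv hScompl hSunion Poss hmax
end
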